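/- arXiv:2209.01876 — 2 statements merged into one kernel-verified Lean document; each statement's English description precedes it below -/
import Mathlib

section
/- (Value-function decomposition) For every state s ∈ S, the value function decomposes into frequency-weighted state-item functions: V_π(s) = (1/N)·Σ_{k∈K: r^π_{s,k}>0} r^π_{s,k}·Q_π(s,k). -/
open scoped Classical

/-! Multiplying `Q_π(s,k)` by `r^π_{s,k}` cancels its normalisation, so the right-hand side is a
double sum over items and slates. Swapping the sums, each slate is counted once per item it contains
in the support of `r^π_s`; a slate of positive probability lies entirely in that support, so it is
counted exactly `N` times. -/

open Finset

section SlateCounting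

variable {K : Type*} [DecidableEq K] {A : Finset (Finset K)}

lemma itemFrequency_pos_of_mem {w : Finset K → ℝ} (hw : ∀ ω ∈ A, 0 ≤ w ω) {ω : Finset K}
    (hωA : ω ∈ A) (hωpos : 0 < w ω) {j : K} (hj : j ∈ ω) :
    0 < ∑ ω' ∈ A, w ω' * (if j ∈ ω' then 1 else 0) :=
  lt_of_lt_of_le (by simpa [hj] using hωpos) <|
    single_le_sum (f := fun ω' => w ω' * (if j ∈ ω' then 1 else 0))
      (fun ω' hω' => mul_nonneg (hw ω' hω') (by split_ifs <;> norm_num)) hωA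

lemma sum_sum_mul_ite_mem_eq_card_mul_sum (T : Finset K) (f : Finset K → ℝ) {N : ℕ}
    (hsub : ∀ ω ∈ A, f ω ≠ 0 → ω ⊆ T) (hcard : ∀ ω ∈ A, ω.card = N) :
    ∑ k ∈ T, ∑ ω ∈ A, f ω * (if k ∈ ω then 1 else 0) = N * ∑ ω ∈ A, f ω := by
  rw [sum_comm, mul_sum]
  refine sum_congr rfl fun ω hω => ?_
  by_cases hf : f ω = 0
  · simp [hf]
  · rw [← mul_sum, sum_boole, filter_mem_eq_inter, inter_eq_right.2 (hsub ω hω hf),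
      hcard ω hω, mul_comm]

end SlateCounting

theorem slateFree_value_decomposition_general
    {S K : Type*} [Fintype K] [DecidableEq K]
    (N : ℕ) (hN : 1 ≤ N)
    (A : S → Finset (Finset K))
    (hcard : ∀ s, ∀ ω ∈ A s, ω.card = N)
    (π : S → Finset K → ℝ)
    (hπ0 : ∀ s, ∀ ω ∈ A s, 0 ≤ π s ω)
    (r : S → K → ℝ)
    (hr : ∀ s j, r s j = ∑ ω ∈ A s, π s ω * (if j ∈ ω then 1 else 0))
    (Q : S → Finset K → ℝ)
    (V : S → ℝ)
    (hV : ∀ s, V s = ∑ ω ∈ A s, π s ω * Q s ω)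
    (Qit : S → K → ℝ)
    (hQit : ∀ s j, 0 < r s j →
      Qit s j = (r s j)⁻¹ * ∑ ω ∈ A s, π s ω * Q s ω * (if j ∈ ω then 1 else 0)) :
    ∀ s : S,
      V s = (1 / (N : ℝ)) *
        ∑ k ∈ Finset.univ.filter (fun k : K => 0 < r s k), r s k * Qit s k := by
  intro s
  set T := univ.filter fun k : K => 0 < r s k
  have hterm : ∀ k ∈ T,
      r s k * Qit s k = ∑ ω ∈ A s, π s ω * Q s ω * (if k ∈ ω then 1 else 0) := by
    intro k hk
    have hrk : 0 < r s k := (mem_filter.1 hk).2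
    rw [hQit s k hrk, mul_inv_cancel_left₀ hrk.ne']
  have hsupp : ∀ ω ∈ A s, π s ω * Q s ω ≠ 0 → ω ⊆ T := fun ω hω hne k hk =>
    mem_filter.2 ⟨mem_univ k, hr s k ▸ itemFrequency_pos_of_mem (hπ0 s) hω
      ((hπ0 s ω hω).lt_of_ne (left_ne_zero_of_mul hne).symm) hk⟩
  have hN0 : (N : ℝ) ≠ 0 := Nat.cast_ne_zero.2 (by omega)
  rw [sum_congr rfl hterm, sum_sum_mul_ite_mem_eq_card_mul_sum T _ hsupp (hcard s), ← hV,
    one_div, inv_mul_cancel_left₀ hN0]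

/-- Value-function decomposition: For every state `s ∈ S`, the value function
decomposes into frequency-weighted state-item functions:
`V_π(s) = (1/N)·Σ_{k∈K : r^π_{s,k}>0} r^π_{s,k}·Q_π(s,k)`. -/
theorem slateFree_value_decomposition
    {S K : Type*} [Fintype S] [Nonempty S] [Fintype K] [DecidableEq K]
    (N : ℕ) (hN : 1 ≤ N)
    (A : S → Finset (Finset K)) (hA : ∀ s, (A s).Nonempty)
    (hcard : ∀ s, ∀ ω ∈ A s, ω.card = N)
    (π : S → Finset K → ℝ)
    (hπ0 : ∀ s, ∀ ω ∈ A s, 0 ≤ π s ω) (hπ1 : ∀ s, ∀ ω ∈ A s, π s ω ≤ 1)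
    (hπsum : ∀ s, ∑ ω ∈ A s, π s ω = 1)
    (r : S → K → ℝ)
    (hr : ∀ s j, r s j = ∑ ω ∈ A s, π s ω * (if j ∈ ω then 1 else 0))
    (Q : S → Finset K → ℝ)
    (V : S → ℝ)
    (hV : ∀ s, V s = ∑ ω ∈ A s, π s ω * Q s ω)
    (Qit : S → K → ℝ)
    (hQit : ∀ s j, 0 < r s j →
      Qit s j = (r s j)⁻¹ * ∑ ω ∈ A s, π s ω * Q s ω * (if j ∈ ω then 1 else 0)) :
    ∀ s : S,
      V s = (1 / (N : ℝ)) *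
        ∑ k ∈ Finset.univ.filter (fun k : K => 0 < r s k), r s k * Qit s k :=
  slateFree_value_decomposition_general N hN A hcard π hπ0 r hr Q V hV Qit hQit
end

section
/- (Theorem 1, SlateFree-MDP) Suppose Q_π satisfies the Bellman policy-evaluation equations. Then for every state s ∈ S and every item j ∈ K with r^π_{s,j} > 0, the state-item functions satisfy the decomposed Bellman equations: Q_π(s,j) = c^π(s,j) + λ·Σ_{s'∈S} P^π(s'|s,j)·(1/N)·Σ_{k∈K: r^π_{s',k}>0} r^π_{s',k}·Q_π(s',k). -/
/-!
Multiply the defining formula of `Q_π(s,j)` by `r^π_{s,j}` and substitute the slate Bellman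
equation: the cost part is `r^π_{s,j} c^π(s,j)` and the transition part is
`r^π_{s,j} Σ_{s'} P^π(s'|s,j) V(s')`, where `V(s') = Σ_ω π_{s'}(ω) Q_π(s',ω)`. It remains to write
`V(s')` through the state-item functions: summing `r^π_{s',k} Q_π(s',k)` over items counts every
slate once per item it contains, i.e. `N` times, and items of frequency zero contribute nothing.
-/

open Finset

section SlateSums

variable {K : Type*} [DecidableEq K]

theorem sum_items_sum_slates_mul_mem [Fintype K] {N : ℕ} (A : Finset (Finset K))
    (hcard : ∀ ω ∈ A, ω.card = N) (f : Finset K → ℝ) :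
    ∑ k : K, ∑ ω ∈ A, f ω * (if k ∈ ω then 1 else 0) = N * ∑ ω ∈ A, f ω := by
  rw [sum_comm, mul_sum]
  refine sum_congr rfl fun ω hω => ?_
  rw [← mul_sum, sum_boole, filter_mem_eq_inter, univ_inter, hcard ω hω, mul_comm]

theorem sum_slates_mul_mem_eq_zero (A : Finset (Finset K)) (π g : Finset K → ℝ)
    (hπ0 : ∀ ω ∈ A, 0 ≤ π ω) {k : K}
    (hfreq : ∑ ω ∈ A, π ω * (if k ∈ ω then 1 else 0) ≤ 0) :
    ∑ ω ∈ A, π ω * g ω * (if k ∈ ω then 1 else 0) = 0 := by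
  have hterm_nonneg : ∀ ω ∈ A, 0 ≤ π ω * (if k ∈ ω then 1 else 0) := fun ω hω =>
    mul_nonneg (hπ0 ω hω) (by split_ifs <;> norm_num)
  have hterm_zero := (sum_eq_zero_iff_of_nonneg hterm_nonneg).mp
    (le_antisymm hfreq (sum_nonneg hterm_nonneg))
  refine sum_eq_zero fun ω hω => ?_
  rw [mul_right_comm, hterm_zero ω hω, zero_mul]

theorem sum_pos_freq_mul_itemAverage [Fintype K] {N : ℕ} (hN : 1 ≤ N) (A : Finset (Finset K))
    (hcard : ∀ ω ∈ A, ω.card = N) (π g : Finset K → ℝ) (hπ0 : ∀ ω ∈ A, 0 ≤ π ω)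
    (r gi : K → ℝ) (hr : ∀ j, r j = ∑ ω ∈ A, π ω * (if j ∈ ω then 1 else 0))
    (hgi : ∀ j, 0 < r j → gi j = (r j)⁻¹ * ∑ ω ∈ A, π ω * g ω * (if j ∈ ω then 1 else 0)) :
    (1 / (N : ℝ)) * ∑ k ∈ univ.filter (fun k => 0 < r k), r k * gi k =
      ∑ ω ∈ A, π ω * g ω := by
  have hN' : (N : ℝ) ≠ 0 := by positivity
  have hunfold : ∀ k ∈ univ.filter (fun k => 0 < r k),
      r k * gi k = ∑ ω ∈ A, π ω * g ω * (if k ∈ ω then 1 else 0) := fun k hk => by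
    have hk : 0 < r k := (mem_filter.mp hk).2
    rw [hgi k hk, mul_inv_cancel_left₀ hk.ne']
  have hdrop : ∀ k ∈ (univ : Finset K),
      ∑ ω ∈ A, π ω * g ω * (if k ∈ ω then 1 else 0) ≠ 0 → 0 < r k := fun k _ hne => by
    by_contra hk
    exact hne (sum_slates_mul_mem_eq_zero A π g hπ0 (hr k ▸ not_lt.mp hk))
  rw [sum_congr rfl hunfold, sum_filter_of_ne hdrop, sum_items_sum_slates_mul_mem A hcard,
    one_div, inv_mul_cancel_left₀ hN']

theorem sum_slates_mul_mem_of_bellman {S : Type*} [Fintype S] (A : Finset (Finset K))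
    (π c Q : Finset K → ℝ) (P : Finset K → S → ℝ) (V : S → ℝ) (lam : ℝ)
    (hBell : ∀ ω ∈ A, Q ω = c ω + lam * ∑ s', P ω s' * V s') (j : K) :
    ∑ ω ∈ A, π ω * Q ω * (if j ∈ ω then 1 else 0) =
      ∑ ω ∈ A, π ω * c ω * (if j ∈ ω then 1 else 0) +
        lam * ∑ s', (∑ ω ∈ A, π ω * (if j ∈ ω then 1 else 0) * P ω s') * V s' := by
  calc ∑ ω ∈ A, π ω * Q ω * (if j ∈ ω then 1 else 0)
      = ∑ ω ∈ A, (π ω * c ω * (if j ∈ ω then 1 else 0) +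
          lam * ∑ s', π ω * (if j ∈ ω then 1 else 0) * P ω s' * V s') :=
        sum_congr rfl fun ω hω => by
          simp_rw [hBell ω hω, mul_assoc _ (P ω _), ← mul_sum]
          ring
    _ = _ := by
        rw [sum_add_distrib, ← mul_sum, sum_comm]
        simp_rw [sum_mul]

end SlateSums

theorem slateFree_MDP_decomposition_general
    {S K : Type*} [Fintype S] [Fintype K] [DecidableEq K]
    (N : ℕ) (hN : 1 ≤ N)
    (A : S → Finset (Finset K))
    (hcard : ∀ s, ∀ ω ∈ A s, ω.card = N)
    (π : S → Finset K → ℝ)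
    (hπ0 : ∀ s, ∀ ω ∈ A s, 0 ≤ π s ω)
    (P : S → Finset K → S → ℝ)
    (r : S → K → ℝ)
    (hr : ∀ s j, r s j = ∑ ω ∈ A s, π s ω * (if j ∈ ω then 1 else 0))
    (Pit : S → K → S → ℝ)
    (hPit : ∀ s j, 0 < r s j → ∀ s',
      Pit s j s' = (r s j)⁻¹ * ∑ ω ∈ A s, π s ω * (if j ∈ ω then 1 else 0) * P s ω s')
    (c : S → Finset K → ℝ)
    (cit : S → K → ℝ)
    (hcit : ∀ s j, 0 < r s j →
      cit s j = (r s j)⁻¹ * ∑ ω ∈ A s, π s ω * c s ω * (if j ∈ ω then 1 else 0))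
    (lam : ℝ)
    (Q : S → Finset K → ℝ)
    (hBell : ∀ s, ∀ ω ∈ A s,
      Q s ω = c s ω + lam * ∑ s' : S, P s ω s' * ∑ ω' ∈ A s', π s' ω' * Q s' ω')
    (Qit : S → K → ℝ)
    (hQit : ∀ s j, 0 < r s j →
      Qit s j = (r s j)⁻¹ * ∑ ω ∈ A s, π s ω * Q s ω * (if j ∈ ω then 1 else 0)) :
    ∀ (s : S) (j : K), 0 < r s j →
      Qit s j = cit s j + lam * ∑ s' : S, Pit s j s' *
        ((1 / (N : ℝ)) *
          ∑ k ∈ Finset.univ.filter (fun k : K => 0 < r s' k), r s' k * Qit s' k) := by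
  intro s j hrj
  have hvalue : ∀ t, (1 / (N : ℝ)) * ∑ k ∈ univ.filter (fun k => 0 < r t k), r t k * Qit t k =
      ∑ ω ∈ A t, π t ω * Q t ω := fun t =>
    sum_pos_freq_mul_itemAverage hN (A t) (hcard t) (π t) (Q t) (hπ0 t) (r t) (Qit t) (hr t)
      (hQit t)
  have htrans : ∀ s', ∑ ω ∈ A s, π s ω * (if j ∈ ω then 1 else 0) * P s ω s' =
      r s j * Pit s j s' := fun s' => by
    rw [hPit s j hrj s', mul_inv_cancel_left₀ hrj.ne']
  rw [hQit s j hrj, hcit s j hrj, sum_slates_mul_mem_of_bellman (A s) (π s) (c s) (Q s) (P s)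
    _ lam (hBell s) j]
  simp_rw [hvalue, htrans, mul_add, mul_sum]
  congr 1
  refine sum_congr rfl fun s' _ => ?_
  field_simp

/-- Theorem 1, SlateFree-MDP: If `Q_π` satisfies the Bellman
policy-evaluation equations, then for every state `s` and item `j` with `r^π_{s,j} > 0`,
the state-item functions satisfy the decomposed Bellman equations:
`Q_π(s,j) = c^π(s,j) + λ·Σ_{s'} P^π(s'|s,j)·(1/N)·Σ_{k : r^π_{s',k}>0} r^π_{s',k}·Q_π(s',k)`. -/
theorem slateFree_MDP_decomposition
    {S K : Type*} [Fintype S] [Nonempty S] [Fintype K] [DecidableEq K]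
    (N : ℕ) (hN : 1 ≤ N)
    (A : S → Finset (Finset K)) (hA : ∀ s, (A s).Nonempty)
    (hcard : ∀ s, ∀ ω ∈ A s, ω.card = N)
    (π : S → Finset K → ℝ)
    (hπ0 : ∀ s, ∀ ω ∈ A s, 0 ≤ π s ω) (hπ1 : ∀ s, ∀ ω ∈ A s, π s ω ≤ 1)
    (hπsum : ∀ s, ∑ ω ∈ A s, π s ω = 1)
    (P : S → Finset K → S → ℝ)
    (hP0 : ∀ s, ∀ ω ∈ A s, ∀ s', 0 ≤ P s ω s')
    (hP1 : ∀ s, ∀ ω ∈ A s, ∀ s', P s ω s' ≤ 1)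
    (hPsum : ∀ s, ∀ ω ∈ A s, ∑ s' : S, P s ω s' = 1)
    (r : S → K → ℝ)
    (hr : ∀ s j, r s j = ∑ ω ∈ A s, π s ω * (if j ∈ ω then 1 else 0))
    (Pit : S → K → S → ℝ)
    (hPit : ∀ s j, 0 < r s j → ∀ s',
      Pit s j s' = (r s j)⁻¹ * ∑ ω ∈ A s, π s ω * (if j ∈ ω then 1 else 0) * P s ω s')
    (c : S → Finset K → ℝ)
    (cit : S → K → ℝ)
    (hcit : ∀ s j, 0 < r s j →
      cit s j = (r s j)⁻¹ * ∑ ω ∈ A s, π s ω * c s ω * (if j ∈ ω then 1 else 0))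
    (lam : ℝ) (hlam0 : 0 < lam) (hlam1 : lam < 1)
    (Q : S → Finset K → ℝ)
    (hBell : ∀ s, ∀ ω ∈ A s,
      Q s ω = c s ω + lam * ∑ s' : S, P s ω s' * ∑ ω' ∈ A s', π s' ω' * Q s' ω')
    (Qit : S → K → ℝ)
    (hQit : ∀ s j, 0 < r s j →
      Qit s j = (r s j)⁻¹ * ∑ ω ∈ A s, π s ω * Q s ω * (if j ∈ ω then 1 else 0)) :
    ∀ (s : S) (j : K), 0 < r s j →
      Qit s j = cit s j + lam * ∑ s' : S, Pit s j s' *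
        ((1 / (N : ℝ)) *
          ∑ k ∈ Finset.univ.filter (fun k : K => 0 < r s' k), r s' k * Qit s' k) :=
  slateFree_MDP_decomposition_general N hN A hcard π hπ0 P r hr Pit hPit c cit hcit lam Q hBell Qit
    hQit
end
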